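/- arXiv:1707.01850 — 2 statements merged into one kernel-verified Lean document; each statement's English description precedes it below -/
import Mathlib

section
/- Let r ≥ 1 be an integer, d > 0 and η > 0 real numbers, φ : ℝ^r → ℂ a Schwartz function with Fourier transform φ̂, and for each integer q ≥ 1 let Ψ_q : ℤ^r → ℂ be a function with |Ψ_q| ≤ 1 that factors through ℤ^r → (ℤ/qℤ)^r, with normalized finite Fourier transform Ψ̂_q. For X > 0 and Z > 0 define E_{>Z}(X,q) := X^{r/d} · ∑ Ψ̂_q(x)·φ̂(x·X^{1/d}/q), the sum over x ∈ ℤ^r having some coordinate of absolute value exceeding Z. Then for every B > 0 there is a constant C depending only on B, η, r, d, and φ such that for all X ≥ 2 and all integers 1 ≤ q < X, taking Z := q·X^{−1/d+η}, one has |E_{>Z}(X,q)| ≤ C·X^{−B}. -/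
/-!
On the tail, the rescaled point `ξ = x · X^{1/d} / q` has `‖ξ‖ ≥ X^η`, and, because `q < X`,
also `|x i| ≤ X ‖ξ‖` for every coordinate. As `|Ψ̂_q| ≤ 1`, each summand is bounded by `|φ̂ ξ|`,
and the Schwartz decay `‖ξ‖^(N + 2r) |φ̂ ξ| ≤ C_N` splits into a factor `X^(-ηN)`, which beats any
fixed power of `X` once `N` is large, and a factor `(1 + X)^(2r) ∏ i, (1 + |x i|)^(-2)`, which is
summable over `ℤ^r`.
-/

open scoped Classical

/-- The normalized finite Fourier transform of a function `Ψ : ℤ^r → ℂ` that factors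
through the reduction map `ℤ^r → (ℤ/qℤ)^r`:
`Ψ̂(w) = q^{-r} ∑_{v ∈ (ℤ/qℤ)^r} Ψ(v) exp(2πi⟨v,w⟩/q)`. -/
noncomputable def fourierZ (r q : ℕ) (Ψ : (Fin r → ℤ) → ℂ) (w : Fin r → ℤ) : ℂ :=
  (q : ℂ) ^ (-(r : ℤ)) *
    ∑ v ∈ Fintype.piFinset (fun _ : Fin r => Finset.range q),
      Ψ (fun i => (v i : ℤ)) *
        Complex.exp (2 * Real.pi * Complex.I * (∑ i, (v i : ℂ) * (w i : ℂ)) / q)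

open Finset

lemma norm_fourierZ_le_one {r q : ℕ} (hq : q ≠ 0) {Ψ : (Fin r → ℤ) → ℂ}
    (hΨ : ∀ x, ‖Ψ x‖ ≤ 1) (w : Fin r → ℤ) : ‖fourierZ r q Ψ w‖ ≤ 1 := by
  have hexp (v : Fin r → ℕ) :
      ‖Complex.exp (2 * Real.pi * Complex.I * (∑ i, (v i : ℂ) * (w i : ℂ)) / q)‖ = 1 := by
    rw [Complex.norm_exp]
    simp
  calc ‖fourierZ r q Ψ w‖
      ≤ (q : ℝ) ^ (-(r : ℤ)) * ∑ _v ∈ Fintype.piFinset (fun _ : Fin r => range q), 1 := by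
        rw [fourierZ, norm_mul, norm_zpow, Complex.norm_natCast]
        gcongr
        refine (norm_sum_le _ _).trans (sum_le_sum fun v _ => ?_)
        rw [norm_mul, hexp, mul_one]
        exact hΨ _
    _ = 1 := by
        simp only [zpow_neg, zpow_natCast, sum_const, Fintype.card_piFinset, card_range,
          prod_const, card_univ, Fintype.card_fin, nsmul_eq_mul, Nat.cast_pow, mul_one]
        exact inv_mul_cancel₀ (by positivity)

lemma summable_pi_prod_of_nonneg {ι α : Type*} [Fintype ι] {f : ι → α → ℝ}
    (hf₀ : ∀ i a, 0 ≤ f i a) (hf : ∀ i, Summable (f i)) :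
    Summable fun x : ι → α => ∏ i, f i (x i) := by
  classical
  refine summable_of_sum_le (c := ∏ i, ∑' a, f i a)
    (fun x => prod_nonneg fun i _ => hf₀ i _) fun s => ?_
  calc ∑ x ∈ s, ∏ i, f i (x i)
      ≤ ∑ x ∈ Fintype.piFinset fun i => s.image (· i), ∏ i, f i (x i) :=
        sum_le_sum_of_subset_of_nonneg
          (fun x hx => Fintype.mem_piFinset.2 fun i => mem_image_of_mem _ hx)
          (fun x _ _ => prod_nonneg fun i _ => hf₀ i _)
    _ = ∏ i, ∑ a ∈ s.image (· i), f i a := (prod_univ_sum _ _).symm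
    _ ≤ ∏ i, ∑' a, f i a :=
        prod_le_prod (fun i _ => sum_nonneg fun a _ => hf₀ i a)
          fun i _ => (hf i).sum_le_tsum _ fun a _ => hf₀ i a

lemma summable_inv_one_add_abs_sq : Summable fun m : ℤ => ((1 + |(m : ℝ)|) ^ 2)⁻¹ := by
  refine Summable.of_norm_bounded_eventually (Real.summable_one_div_int_pow.mpr one_lt_two) ?_
  filter_upwards [Filter.eventually_cofinite_ne 0] with m hm
  rw [Real.norm_of_nonneg (by positivity), one_div, ← sq_abs (m : ℝ)]
  exact inv_anti₀ (by positivity) (by gcongr; linarith)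

lemma abs_mul_div_le_norm_toLp {ι : Type*} [Fintype ι] (y : ι → ℝ) {s q : ℝ} (hs : 0 ≤ s)
    (hq : 0 ≤ q) (i : ι) :
    |y i| * s / q ≤ ‖(WithLp.toLp 2 fun i => y i * s / q : EuclideanSpace ℝ ι)‖ := by
  refine le_of_eq_of_le ?_ (PiLp.norm_apply_le _ i)
  simp [abs_of_nonneg hs, abs_of_nonneg hq]

lemma prod_one_add_abs_sq_le {ι : Type*} [Fintype ι] {t : ℝ} (ht : 1 ≤ t) {y : ι → ℝ} {L : ℝ}
    (hy : ∀ i, |y i| ≤ L * t) :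
    ∏ i, (1 + |y i|) ^ 2 ≤ ((1 + L) * t) ^ (2 * Fintype.card ι) := by
  calc ∏ i, (1 + |y i|) ^ 2 ≤ ∏ _i : ι, ((1 + L) * t) ^ 2 :=
        prod_le_prod (fun i _ => by positivity) fun i _ => by gcongr; linarith [hy i]
    _ = ((1 + L) * t) ^ (2 * Fintype.card ι) := by rw [prod_const, card_univ, pow_mul]

lemma SchwartzMap.norm_apply_le_of_le_norm {ι E V : Type*} [Fintype ι] [NormedAddCommGroup E]
    [NormedSpace ℝ E] [NormedAddCommGroup V] [NormedSpace ℝ V] (F : SchwartzMap E V) (N : ℕ)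
    {T L : ℝ} (hT : 1 ≤ T) {ξ : E} (hξ : T ≤ ‖ξ‖) {y : ι → ℝ} (hy : ∀ i, |y i| ≤ L * ‖ξ‖) :
    ‖F ξ‖ ≤ (1 + L) ^ (2 * Fintype.card ι) * SchwartzMap.seminorm ℝ (N + 2 * Fintype.card ι) 0 F /
      T ^ N * ∏ i, ((1 + |y i|) ^ 2)⁻¹ := by
  have hξ₁ : 1 ≤ ‖ξ‖ := hT.trans hξ
  rw [prod_inv_distrib, ← div_eq_mul_inv, div_div, le_div_iff₀ (by positivity)]
  calc ‖F ξ‖ * (T ^ N * ∏ i, (1 + |y i|) ^ 2)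
      ≤ ‖F ξ‖ * (‖ξ‖ ^ N * ((1 + L) * ‖ξ‖) ^ (2 * Fintype.card ι)) := by
        gcongr
        exact prod_one_add_abs_sq_le hξ₁ hy
    _ = (1 + L) ^ (2 * Fintype.card ι) * (‖ξ‖ ^ (N + 2 * Fintype.card ι) * ‖F ξ‖) := by
        rw [mul_pow, pow_add]
        ring
    _ ≤ _ := by
        gcongr
        · exact (even_two_mul _).pow_nonneg _
        · exact F.norm_pow_mul_le_seminorm ℝ _ ξ

lemma exists_rpow_mul_pow_div_le {η : ℝ} (hη : 0 < η) (a b : ℝ) (k : ℕ) :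
    ∃ N : ℕ, ∀ X : ℝ, 1 ≤ X → X ^ a * (1 + X) ^ k / (X ^ η) ^ N ≤ 2 ^ k * X ^ b := by
  refine ⟨⌈(a + k - b) / η⌉₊, fun X hX => ?_⟩
  have hX₀ : 0 < X := by linarith
  have hN := (div_le_iff₀ hη).mp (Nat.le_ceil ((a + k - b) / η))
  rw [div_le_iff₀ (by positivity)]
  calc X ^ a * (1 + X) ^ k ≤ X ^ a * (2 * X) ^ k := by gcongr; linarith
    _ = 2 ^ k * X ^ (a + k) := by rw [Real.rpow_add hX₀, Real.rpow_natCast, mul_pow]; ring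
    _ ≤ 2 ^ k * X ^ (b + η * ⌈(a + k - b) / η⌉₊) := by
        gcongr 2 ^ k * ?_
        exact Real.rpow_le_rpow_of_exponent_le hX (by linarith)
    _ = 2 ^ k * X ^ b * (X ^ η) ^ ⌈(a + k - b) / η⌉₊ := by
        rw [Real.rpow_add hX₀, Real.rpow_mul hX₀.le, Real.rpow_natCast, mul_assoc]

lemma SchwartzMap.norm_apply_rescaled_le {ι : Type*} [Fintype ι] (F : SchwartzMap (EuclideanSpace ℝ ι) ℂ)
    (N : ℕ) {d η X q : ℝ} (hd : 0 < d) (hη : 0 ≤ η) (hX : 1 ≤ X) (hq : 0 < q) (hqX : q ≤ X)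
    {x : ι → ℤ} (hx : ∃ i, q * X ^ (-(1 / d) + η) < |(x i : ℝ)|) :
    ‖F (WithLp.toLp 2 fun i => (x i : ℝ) * X ^ (1 / d) / q)‖ ≤
      (1 + X) ^ (2 * Fintype.card ι) * SchwartzMap.seminorm ℝ (N + 2 * Fintype.card ι) 0 F /
        (X ^ η) ^ N * ∏ i, ((1 + |(x i : ℝ)|) ^ 2)⁻¹ := by
  have hs : 1 ≤ X ^ (1 / d) := Real.one_le_rpow hX (by positivity)
  have hξ := abs_mul_div_le_norm_toLp (fun i => (x i : ℝ)) (zero_le_one.trans hs) hq.le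
  refine F.norm_apply_le_of_le_norm N (Real.one_le_rpow hX hη) ?_ fun i => ?_
  · obtain ⟨i, hi⟩ := hx
    calc X ^ η = q * X ^ (-(1 / d) + η) * X ^ (1 / d) / q := by
          rw [mul_assoc, ← Real.rpow_add (by positivity), neg_add_cancel_comm,
            mul_div_cancel_left₀ _ hq.ne']
      _ ≤ |(x i : ℝ)| * X ^ (1 / d) / q := by gcongr
      _ ≤ _ := hξ i
  · calc |(x i : ℝ)| = q * (|(x i : ℝ)| / q) := (mul_div_cancel₀ _ hq.ne').symm
      _ ≤ X * (|(x i : ℝ)| * X ^ (1 / d) / q) := by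
          gcongr
          exact le_mul_of_one_le_right (abs_nonneg _) hs
      _ ≤ _ := by gcongr; exact hξ i

lemma norm_tail_summand_le {r q : ℕ} (hq : q ≠ 0) {Ψ : (Fin r → ℤ) → ℂ} (hΨ : ∀ x, ‖Ψ x‖ ≤ 1)
    (φ : SchwartzMap (EuclideanSpace ℝ (Fin r)) ℂ) (N : ℕ) {d η X : ℝ} (hd : 0 < d) (hη : 0 ≤ η)
    (hX : 1 ≤ X) (hqX : (q : ℝ) ≤ X) (x : Fin r → ℤ) :
    ‖if ∃ i, (q : ℝ) * X ^ (-(1 / d) + η) < |(x i : ℝ)| then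
        fourierZ r q Ψ x * FourierTransform.fourier (⇑φ : EuclideanSpace ℝ (Fin r) → ℂ)
          (WithLp.toLp 2 fun i => (x i : ℝ) * X ^ (1 / d) / q)
      else 0‖ ≤
      (1 + X) ^ (2 * r) * SchwartzMap.seminorm ℝ (N + 2 * r) 0 (FourierTransform.fourier φ) /
        (X ^ η) ^ N * ∏ i, ((1 + |(x i : ℝ)|) ^ 2)⁻¹ := by
  split_ifs with hx
  · rw [norm_mul]
    refine (mul_le_of_le_one_left (norm_nonneg _) (norm_fourierZ_le_one hq hΨ x)).trans ?_
    rw [← SchwartzMap.fourier_coe]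
    simpa only [Fintype.card_fin] using SchwartzMap.norm_apply_rescaled_le (FourierTransform.fourier φ) N hd
      hη hX (by positivity) hqX hx
  · simp only [norm_zero]
    positivity

theorem tail_bound_negligible_general
    (r : ℕ) (d : ℝ) (hd : 0 < d) (η : ℝ) (hη : 0 < η)
    (φ : SchwartzMap (EuclideanSpace ℝ (Fin r)) ℂ)
    (B : ℝ) :
    ∃ C : ℝ, 0 < C ∧
      ∀ X : ℝ, 2 ≤ X → ∀ q : ℕ, 1 ≤ q → (q : ℝ) < X →
      ∀ Ψ : (Fin r → ℤ) → ℂ,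
        (∀ x, ‖Ψ x‖ ≤ 1) →
        (∀ x y : Fin r → ℤ, (∀ i, (q : ℤ) ∣ x i - y i) → Ψ x = Ψ y) →
        ‖(X ^ ((r : ℝ) / d) : ℝ) *
            ∑' x : Fin r → ℤ,
              if ∃ i, (q : ℝ) * X ^ (-(1 / d) + η) < |(x i : ℝ)| then
                fourierZ r q Ψ x *
                  FourierTransform.fourier (⇑φ : EuclideanSpace ℝ (Fin r) → ℂ)
                    ((WithLp.toLp 2 (fun i => (x i : ℝ) * X ^ (1 / d) / q) : EuclideanSpace ℝ (Fin r)))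
              else 0‖
          ≤ C * X ^ (-B) := by
  obtain ⟨N, hN⟩ := exists_rpow_mul_pow_div_le hη ((r : ℝ) / d) (-B) (2 * r)
  let S := SchwartzMap.seminorm ℝ (N + 2 * r) 0 (FourierTransform.fourier φ)
  let g : (Fin r → ℤ) → ℝ := fun x => ∏ i, ((1 + |(x i : ℝ)|) ^ 2)⁻¹
  have hg : Summable g :=
    summable_pi_prod_of_nonneg (f := fun _ (m : ℤ) => ((1 + |(m : ℝ)|) ^ 2)⁻¹)
      (fun _ _ => by positivity) fun _ => summable_inv_one_add_abs_sq
  refine ⟨2 ^ (2 * r) * S * (∑' x, g x) + 1, by positivity,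
    fun X hX q hq hqX Ψ hΨ _ => ?_⟩
  have hX₁ : 1 ≤ X := by linarith
  have hsum := tsum_of_norm_bounded (hg.hasSum.mul_left _)
    (norm_tail_summand_le (by omega) hΨ φ N hd hη.le hX₁ hqX.le)
  rw [norm_mul, Complex.norm_real, Real.norm_of_nonneg (by positivity)]
  calc X ^ ((r : ℝ) / d) * ‖∑' x, _‖
      ≤ X ^ ((r : ℝ) / d) * ((1 + X) ^ (2 * r) * S / (X ^ η) ^ N * ∑' x, g x) :=
        mul_le_mul_of_nonneg_left hsum (by positivity)
    _ = S * (∑' x, g x) * (X ^ ((r : ℝ) / d) * (1 + X) ^ (2 * r) / (X ^ η) ^ N) := by ring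
    _ ≤ S * (∑' x, g x) * (2 ^ (2 * r) * X ^ (-B)) := by gcongr; exact hN X hX₁
    _ = 2 ^ (2 * r) * S * (∑' x, g x) * X ^ (-B) := by ring
    _ ≤ (2 ^ (2 * r) * S * (∑' x, g x) + 1) * X ^ (-B) := by gcongr; linarith

/-- With the choice `Z = q·X^{-1/d+η}`, the tail `E_{>Z}` of the Poisson-summation
error term is `O_B(X^{-B})` for every `B > 0`, uniformly over `1 ≤ q < X`. -/
theorem tail_bound_negligible
    (r : ℕ) (hr : 1 ≤ r) (d : ℝ) (hd : 0 < d) (η : ℝ) (hη : 0 < η)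
    (φ : SchwartzMap (EuclideanSpace ℝ (Fin r)) ℂ)
    (B : ℝ) (hB : 0 < B) :
    ∃ C : ℝ, 0 < C ∧
      ∀ X : ℝ, 2 ≤ X → ∀ q : ℕ, 1 ≤ q → (q : ℝ) < X →
      ∀ Ψ : (Fin r → ℤ) → ℂ,
        (∀ x, ‖Ψ x‖ ≤ 1) →
        (∀ x y : Fin r → ℤ, (∀ i, (q : ℤ) ∣ x i - y i) → Ψ x = Ψ y) →
        ‖(X ^ ((r : ℝ) / d) : ℝ) *
            ∑' x : Fin r → ℤ,
              if ∃ i, (q : ℝ) * X ^ (-(1 / d) + η) < |(x i : ℝ)| then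
                fourierZ r q Ψ x *
                  FourierTransform.fourier (⇑φ : EuclideanSpace ℝ (Fin r) → ℂ)
                    ((WithLp.toLp 2 (fun i => (x i : ℝ) * X ^ (1 / d) / q) : EuclideanSpace ℝ (Fin r)))
              else 0‖
          ≤ C * X ^ (-B) :=
  tail_bound_negligible_general r d hd η hη φ B
end

section
/- For every real Y ≥ 1, the number of quadruples (a,b,c,d) ∈ ℤ⁴ with |a| ≤ Y, |b| ≤ Y, |c| ≤ Y, |d| ≤ Y and b²c² − 4ac³ − 4b³d − 27a²d² + 18abcd = 0 is at most C·Y² for an absolute constant C. -/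
/-!
A binary cubic form of discriminant zero has a singular point: a common zero `(p, q)` of both
partial derivatives, which may be taken integral and primitive. A unimodular change of variables
moving it to `(1, 0)` shows that the form is `L² M` with integral linear forms `L`, `M`. At one
of the points `(1,0)`, `(0,1)`, `(1,1)` both `L` and `M` are at least a third of their heights,
while the form is at most `4Y` there; hence `H(L)² H(M) ≤ 108 Y`. Finally, there are `O(W²)`
pairs `(L, M)` with `H(L)² H(M) ≤ W`: for each of the `8n` linear forms `M` of height `n` there
are `O(W / n)` choices of `L`.
-/

open Finset

namespace BinaryCubic

def disc (a b c d : ℤ) : ℤ :=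
  b ^ 2 * c ^ 2 - 4 * a * c ^ 3 - 4 * b ^ 3 * d - 27 * a ^ 2 * d ^ 2 + 18 * a * b * c * d

/-- Both partial derivatives of `a u³ + b u² v + c u v² + d v³` vanish at `(p, q)`. -/
def IsSingularAt (a b c d p q : ℤ) : Prop :=
  3 * a * p ^ 2 + 2 * b * p * q + c * q ^ 2 = 0 ∧ b * p ^ 2 + 2 * c * p * q + 3 * d * q ^ 2 = 0

/-- The coefficients of `(L.1 u + L.2 v)² (M.1 u + M.2 v)`. -/
def sqMul (L M : ℤ × ℤ) : ℤ × ℤ × ℤ × ℤ :=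
  (L.1 ^ 2 * M.1, L.1 ^ 2 * M.2 + 2 * L.1 * L.2 * M.1, L.2 ^ 2 * M.1 + 2 * L.1 * L.2 * M.2,
    L.2 ^ 2 * M.2)

def height (L : ℤ × ℤ) : ℕ := max L.1.natAbs L.2.natAbs

variable {a b c d : ℤ}

theorem exists_isSingularAt_of_disc_eq_zero (h : disc a b c d = 0) :
    ∃ p q : ℤ, (p, q) ≠ 0 ∧ IsSingularAt a b c d p q := by
  unfold disc at h
  -- The double root `u : v` is `(9ad - bc) : 2(b² - 3ac)`, or the triple root `-b : 3a`
  -- when `b² = 3ac` (`1 : 0` if moreover `a = 0`).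
  by_cases hΔ : b ^ 2 - 3 * a * c = 0
  · by_cases ha : a = 0
    · have hb : b = 0 := by subst ha; simpa using hΔ
      exact ⟨1, 0, by simp, by simp [ha, hb], by simp [hb]⟩
    · have hd : 27 * a ^ 2 * d - b ^ 3 = 0 := pow_eq_zero_iff two_ne_zero |>.mp <| by
        linear_combination (-27 * a ^ 2) * h +
          (-162 * a ^ 2 * b * d + 36 * a ^ 2 * c ^ 2 + 3 * a * b ^ 2 * c + b ^ 4) * hΔ
      refine ⟨-b, 3 * a, by simp [ha], ?_, ?_⟩
      · linear_combination (-3 * a) * hΔ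
      · linear_combination hd + 2 * b * hΔ
  · refine ⟨9 * a * d - b * c, 2 * (b ^ 2 - 3 * a * c), by simp [hΔ], ?_, ?_⟩
    · linear_combination (-9 * a) * h
    · linear_combination (-3 * b) * h

theorem IsSingularAt.of_mul {p q k : ℤ} (hk : k ≠ 0)
    (h : IsSingularAt a b c d (p * k) (q * k)) : IsSingularAt a b c d p q := by
  have hk2 : k ^ 2 ≠ 0 := pow_ne_zero 2 hk
  exact ⟨mul_left_cancel₀ hk2 (by linear_combination h.1),
    mul_left_cancel₀ hk2 (by linear_combination h.2)⟩

theorem exists_isCoprime_isSingularAt {p q : ℤ} (hpq : (p, q) ≠ 0)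
    (h : IsSingularAt a b c d p q) :
    ∃ p' q' : ℤ, IsCoprime p' q' ∧ IsSingularAt a b c d p' q' := by
  have hgcd : 0 < Int.gcd p q :=
    Int.gcd_pos_iff.2 (by rwa [ne_eq, Prod.mk_eq_zero, not_and_or] at hpq)
  obtain ⟨k, p', q', hk, hcop, rfl, rfl⟩ := Int.exists_gcd_one' hgcd
  exact ⟨p', q', Int.isCoprime_iff_gcd_eq_one.2 hcop, h.of_mul (by exact_mod_cast hk.ne')⟩

theorem exists_eq_sqMul_of_isSingularAt {p q : ℤ} (hpq : IsCoprime p q)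
    (h : IsSingularAt a b c d p q) : ∃ e g : ℤ, (a, b, c, d) = sqMul (q, -p) (e, g) := by
  obtain ⟨x, y, hxy⟩ := hpq
  obtain ⟨hu, hv⟩ := h
  have hF : a * p ^ 3 + b * p ^ 2 * q + c * p * q ^ 2 + d * q ^ 3 = 0 :=
    mul_left_cancel₀ (three_ne_zero (α := ℤ)) (by linear_combination p * hu + q * hv)
  /- The substitution `(u, v) ↦ (p u - y v, q u + x v)` of determinant `1` moves `(p, q)` to
  `(1, 0)`, turning the form into `v² (c' u + d' v)`; undoing it gives the factorization. -/
  set c' := p * (3 * a * y ^ 2 - 2 * b * y * x + c * x ^ 2) +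
    q * (b * y ^ 2 - 2 * c * y * x + 3 * d * x ^ 2)
  set d' := -a * y ^ 3 + b * y ^ 2 * x - c * y * x ^ 2 + d * x ^ 3
  refine ⟨c' * x - d' * q, c' * y + d' * p, ?_⟩
  simp only [sqMul, Prod.mk.injEq]
  set δ := x * p + y * q
  refine ⟨?_, ?_, ?_, ?_⟩
  · linear_combination (-a * (δ ^ 2 + δ + 1)) * hxy + x ^ 3 * hF - x ^ 2 * q * (x * hv - y * hu)
  · linear_combination (-b * (δ ^ 2 + δ + 1)) * hxy + 3 * x ^ 2 * y * hF +
      (p * x ^ 2 - 2 * q * x * y) * (x * hv - y * hu)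
  · linear_combination (-c * (δ ^ 2 + δ + 1)) * hxy + 3 * x * y ^ 2 * hF +
      (2 * p * x * y - q * y ^ 2) * (x * hv - y * hu)
  · linear_combination (-d * (δ ^ 2 + δ + 1)) * hxy + y ^ 3 * hF + p * y ^ 2 * (x * hv - y * hu)

theorem exists_eq_sqMul_of_disc_eq_zero (h : disc a b c d = 0) :
    ∃ L M : ℤ × ℤ, (a, b, c, d) = sqMul L M := by
  obtain ⟨p, q, hpq, hsing⟩ := exists_isSingularAt_of_disc_eq_zero h
  obtain ⟨p', q', hcop, hsing'⟩ := exists_isCoprime_isSingularAt hpq hsing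
  obtain ⟨e, g, hfac⟩ := exists_eq_sqMul_of_isSingularAt hcop hsing'
  exact ⟨_, _, hfac⟩

theorem height_le_three_mul_natAbs (r s : ℤ) :
    (height (r, s) ≤ 3 * r.natAbs ∨ height (r, s) ≤ 3 * s.natAbs) ∧
    (height (r, s) ≤ 3 * r.natAbs ∨ height (r, s) ≤ 3 * (r + s).natAbs) ∧
    (height (r, s) ≤ 3 * s.natAbs ∨ height (r, s) ≤ 3 * (r + s).natAbs) := by
  unfold height
  omega

theorem height_le_three_mul_natAbs_eval (L M : ℤ × ℤ) :
    (height L ≤ 3 * L.1.natAbs ∧ height M ≤ 3 * M.1.natAbs) ∨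
    (height L ≤ 3 * L.2.natAbs ∧ height M ≤ 3 * M.2.natAbs) ∨
    (height L ≤ 3 * (L.1 + L.2).natAbs ∧ height M ≤ 3 * (M.1 + M.2).natAbs) := by
  have hL := height_le_three_mul_natAbs L.1 L.2
  have hM := height_le_three_mul_natAbs M.1 M.2
  tauto

theorem height_sq_mul_height_le {L M : ℤ × ℤ} {B : ℕ} (h : sqMul L M = (a, b, c, d))
    (ha : a.natAbs ≤ B) (hb : b.natAbs ≤ B) (hc : c.natAbs ≤ B) (hd : d.natAbs ≤ B) :
    height L ^ 2 * height M ≤ 108 * B := by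
  have key : ∀ x y : ℤ, height L ≤ 3 * x.natAbs → height M ≤ 3 * y.natAbs →
      (x ^ 2 * y).natAbs ≤ 4 * B → height L ^ 2 * height M ≤ 108 * B := by
    intro x y hx hy hxy
    calc height L ^ 2 * height M ≤ (3 * x.natAbs) ^ 2 * (3 * y.natAbs) :=
          Nat.mul_le_mul (Nat.pow_le_pow_left hx 2) hy
      _ = 27 * (x ^ 2 * y).natAbs := by rw [Int.natAbs_mul, Int.natAbs_pow]; ring
      _ ≤ 108 * B := by omega
  obtain ⟨r, s⟩ := L
  obtain ⟨e, g⟩ := M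
  simp only [sqMul, Prod.mk.injEq] at h
  obtain ⟨rfl, rfl, rfl, rfl⟩ := h
  rcases height_le_three_mul_natAbs_eval (r, s) (e, g) with
    ⟨hL, hM⟩ | ⟨hL, hM⟩ | ⟨hL, hM⟩
  · exact key r e hL hM (by omega)
  · exact key s g hL hM (by omega)
  · refine key (r + s) (e + g) hL hM ?_
    have hsum : (r + s) ^ 2 * (e + g) = r ^ 2 * e + (r ^ 2 * g + 2 * r * s * e) +
        (s ^ 2 * e + 2 * r * s * g) + s ^ 2 * g := by ring
    rw [hsum]
    omega

theorem one_le_height {L : ℤ × ℤ} (hL : L ≠ 0) : 1 ≤ height L :=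
  Nat.one_le_iff_ne_zero.2 fun h ↦ hL ((eq_zero_iff_eq_zero_of_mem_box (Int.mem_box.2 rfl)).2 h)

def lowHeightPairs (W : ℕ) : Set ((ℤ × ℤ) × (ℤ × ℤ)) :=
  {LM | LM.1 ≠ 0 ∧ LM.2 ≠ 0 ∧ height LM.1 ^ 2 * height LM.2 ≤ W}

noncomputable def lowHeightCover (W : ℕ) : Finset ((ℤ × ℤ) × (ℤ × ℤ)) :=
  (Icc 1 W).biUnion fun n ↦
    (Icc (-((W / n).sqrt : ℤ)) (W / n).sqrt ×ˢ Icc (-((W / n).sqrt : ℤ)) (W / n).sqrt) ×ˢ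
      box n

theorem lowHeightPairs_subset_lowHeightCover (W : ℕ) :
    lowHeightPairs W ⊆ lowHeightCover W := by
  rintro ⟨L, M⟩ ⟨hL, hM, hLM⟩
  dsimp only at hL hM hLM
  have hL1 := one_le_height hL
  have hM1 := one_le_height hM
  have hLs : height L ≤ (W / height M).sqrt :=
    Nat.le_sqrt'.2 <| (Nat.le_div_iff_mul_le (by omega)).2 hLM
  have hL₁ : L.1.natAbs ≤ height L := le_max_left ..
  have hL₂ : L.2.natAbs ≤ height L := le_max_right ..
  simp only [lowHeightCover, coe_biUnion, coe_Icc, Set.mem_Icc, Set.mem_iUnion, coe_product,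
    Set.mem_prod, mem_coe, Int.mem_box, exists_prop]
  refine ⟨height M, ⟨hM1, ?_⟩, ?_, rfl⟩
  · exact (Nat.le_mul_of_pos_left _ (by positivity)).trans hLM
  · omega

theorem card_lowHeightCover_le (W : ℕ) : #(lowHeightCover W) ≤ 72 * W ^ 2 := by
  refine (card_biUnion_le ..).trans ?_
  calc _ ≤ ∑ _n ∈ Icc 1 W, 72 * W := sum_le_sum fun n hn ↦ ?_
    _ = 72 * W ^ 2 := by simp; ring
  rw [mem_Icc] at hn
  set s := (W / n).sqrt
  have hs1 : 1 ≤ s := Nat.le_sqrt'.2 <| (Nat.le_div_iff_mul_le (by omega)).2 (by omega)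
  have hsn : s ^ 2 * n ≤ W :=
    (Nat.mul_le_mul_right n (Nat.sqrt_le' _)).trans (Nat.div_mul_le_self W n)
  rw [card_product, card_product, Int.card_Icc, Int.card_box (by omega)]
  have : (↑s + 1 - -↑s : ℤ).toNat = 2 * s + 1 := by omega
  rw [this]
  nlinarith

theorem lowHeightPairs_finite (W : ℕ) : (lowHeightPairs W).Finite :=
  (lowHeightCover W).finite_toSet.subset (lowHeightPairs_subset_lowHeightCover W)

theorem ncard_lowHeightPairs_le (W : ℕ) : (lowHeightPairs W).ncard ≤ 72 * W ^ 2 := by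
  calc (lowHeightPairs W).ncard ≤ (lowHeightCover W : Set _).ncard :=
        Set.ncard_le_ncard (lowHeightPairs_subset_lowHeightCover W) (finite_toSet _)
    _ ≤ 72 * W ^ 2 := by rw [Set.ncard_coe_finset]; exact card_lowHeightCover_le W

def lowHeightForms (W : ℕ) : Set (ℤ × ℤ × ℤ × ℤ) :=
  insert 0 (Function.uncurry sqMul '' lowHeightPairs W)

theorem lowHeightForms_finite (W : ℕ) : (lowHeightForms W).Finite :=
  ((lowHeightPairs_finite W).image _).insert 0

theorem ncard_lowHeightForms_le (W : ℕ) : (lowHeightForms W).ncard ≤ 72 * W ^ 2 + 1 :=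
  (Set.ncard_insert_le _ _).trans <| Nat.add_le_add_right
    ((Set.ncard_image_le (lowHeightPairs_finite W)).trans (ncard_lowHeightPairs_le W)) 1

theorem mem_lowHeightForms_of_disc_eq_zero {B : ℕ} (h : disc a b c d = 0)
    (ha : a.natAbs ≤ B) (hb : b.natAbs ≤ B) (hc : c.natAbs ≤ B) (hd : d.natAbs ≤ B) :
    (a, b, c, d) ∈ lowHeightForms (108 * B) := by
  obtain ⟨L, M, hLM⟩ := exists_eq_sqMul_of_disc_eq_zero h
  rcases eq_or_ne L 0 with rfl | hL
  · exact Or.inl (by simp [hLM, sqMul])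
  rcases eq_or_ne M 0 with rfl | hM
  · exact Or.inl (by simp [hLM, sqMul])
  exact Or.inr ⟨(L, M), ⟨hL, hM, height_sq_mul_height_le hLM.symm ha hb hc hd⟩, hLM.symm⟩

end BinaryCubic

/-- The number of integral binary cubic forms with vanishing discriminant and all four
coefficients bounded by `Y` is `O(Y²)`. -/
theorem count_discriminant_zero_cubic_forms :
    ∃ C : ℝ, 0 < C ∧ ∀ Y : ℝ, 1 ≤ Y →
      (({x : ℤ × ℤ × ℤ × ℤ |
          (|x.1| : ℝ) ≤ Y ∧ (|x.2.1| : ℝ) ≤ Y ∧ (|x.2.2.1| : ℝ) ≤ Y ∧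
          (|x.2.2.2| : ℝ) ≤ Y ∧
          x.2.1 ^ 2 * x.2.2.1 ^ 2 - 4 * x.1 * x.2.2.1 ^ 3 - 4 * x.2.1 ^ 3 * x.2.2.2
            - 27 * x.1 ^ 2 * x.2.2.2 ^ 2 + 18 * x.1 * x.2.1 * x.2.2.1 * x.2.2.2
            = 0}.ncard : ℝ)) ≤ C * Y ^ 2 := by
  refine ⟨72 * 108 ^ 2 + 1, by norm_num, fun Y hY ↦ ?_⟩
  set B := ⌊Y⌋₊
  have hB : (B : ℝ) ≤ Y := Nat.floor_le (by linarith)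
  have hfloor : ∀ z : ℤ, (|z| : ℝ) ≤ Y → z.natAbs ≤ B := fun z hz ↦
    Nat.le_floor (by rwa [Nat.cast_natAbs, Int.cast_abs])
  have hsub : {x : ℤ × ℤ × ℤ × ℤ | (|x.1| : ℝ) ≤ Y ∧ (|x.2.1| : ℝ) ≤ Y ∧
      (|x.2.2.1| : ℝ) ≤ Y ∧ (|x.2.2.2| : ℝ) ≤ Y ∧
      BinaryCubic.disc x.1 x.2.1 x.2.2.1 x.2.2.2 = 0} ⊆ BinaryCubic.lowHeightForms (108 * B) := by
    rintro ⟨a, b, c, d⟩ ⟨ha, hb, hc, hd, h⟩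
    exact BinaryCubic.mem_lowHeightForms_of_disc_eq_zero h
      (hfloor a ha) (hfloor b hb) (hfloor c hc) (hfloor d hd)
  calc _ ≤ ((72 * (108 * B) ^ 2 + 1 : ℕ) : ℝ) := Nat.cast_le.2 <|
        (Set.ncard_le_ncard hsub (BinaryCubic.lowHeightForms_finite _)).trans
          (BinaryCubic.ncard_lowHeightForms_le _)
    _ ≤ (72 * 108 ^ 2 + 1) * Y ^ 2 := by push_cast; nlinarith
end
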